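/- Let N ≥ 1, R ∈ M_N(ℂ), and let ω : (0,∞) → [0,∞) satisfy ω(ε) = o(ε) as ε → 0. Let (R_{ε,n})_{ε>0, n≥0} be matrices with sup_n ‖R_{ε,n}‖ ≤ ω(ε). Define M_ε(t) := ∏_{n=0}^{⌊ε⁻¹t⌋−1} (Id − εR + R_{ε,n}) (in any fixed order of multiplication). Then M_ε converges to the function t ↦ e^{−tR} uniformly on compact subsets of [0,∞) as ε → 0. -/

import Mathlib

/-!
A step `1 - ε • R + r` differs from `exp (-(ε • R))` by `O(ε² + ‖r‖)` and has norm at most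
`exp (ε ‖R‖ + ‖r‖)`. Telescoping the product of `m = ⌊t / ε⌋` steps against `exp (-(ε • R)) ^ m`
therefore costs `O(t (ε + ω(ε) / ε))`, uniformly for `t ≤ T`; and `exp (-(ε • R)) ^ m` equals
`exp (-((m ε) • R))`, which is within `O(ε)` of `exp (-(t • R))` because `0 ≤ t - m ε < ε`.
-/

open Filter
open scoped Topology Nat

namespace NormedSpace

variable {𝔸 : Type*} [NormedRing 𝔸] [NormedAlgebra ℝ 𝔸] [NormOneClass 𝔸] [CompleteSpace 𝔸]

theorem norm_exp_sub_sum_le (x : 𝔸) (n : ℕ) :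
    ‖exp x - ∑ m ∈ Finset.range n, (m !⁻¹ : ℝ) • x ^ m‖ ≤ ‖x‖ ^ n * Real.exp ‖x‖ := by
  rw [congrFun (exp_eq_tsum ℝ) x, ← (expSeries_summable' (𝕂 := ℝ) x).sum_add_tsum_nat_add n,
    add_sub_cancel_left, Real.exp_eq_exp_ℝ]
  refine tsum_of_norm_bounded ((expSeries_div_hasSum_exp ‖x‖).mul_left _) fun i => ?_
  calc ‖((i + n)! : ℝ)⁻¹ • x ^ (i + n)‖ = ((i + n)! : ℝ)⁻¹ * ‖x ^ (i + n)‖ := by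
        rw [norm_smul, norm_inv, RCLike.norm_natCast]
    _ ≤ (i ! : ℝ)⁻¹ * ‖x‖ ^ (i + n) := by
        gcongr
        · exact Nat.le_add_right i n
        · exact norm_pow_le x _
    _ = ‖x‖ ^ n * (‖x‖ ^ i / i !) := by ring

theorem norm_exp_le_exp_norm (x : 𝔸) : ‖exp x‖ ≤ Real.exp ‖x‖ := by
  simpa using norm_exp_sub_sum_le x 0

theorem norm_exp_sub_one_le (x : 𝔸) : ‖exp x - 1‖ ≤ ‖x‖ * Real.exp ‖x‖ := by
  simpa using norm_exp_sub_sum_le x 1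

theorem norm_exp_sub_one_sub_le (x : 𝔸) : ‖exp x - 1 - x‖ ≤ ‖x‖ ^ 2 * Real.exp ‖x‖ := by
  simpa [Finset.sum_range_succ, sub_sub] using norm_exp_sub_sum_le x 2

theorem norm_exp_add_sub_exp_le {x y : 𝔸} (h : Commute x y) :
    ‖exp (x + y) - exp x‖ ≤ Real.exp ‖x‖ * (‖y‖ * Real.exp ‖y‖) := by
  -- `exp_add_of_commute` is stated for `ℚ`-algebras.
  let +nondep : NormedAlgebra ℚ 𝔸 := .restrictScalars ℚ ℝ 𝔸
  rw [exp_add_of_commute h, ← mul_sub_one]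
  exact (norm_mul_le _ _).trans <|
    mul_le_mul (norm_exp_le_exp_norm x) (norm_exp_sub_one_le y) (norm_nonneg _) (by positivity)

end NormedSpace

-- `K` stands for `‖R‖` and `q` for `ρ / ε`, where `ρ` bounds the perturbations `r n`.
noncomputable def eulerErrorBound (K t ε q : ℝ) : ℝ :=
  Real.exp (t * (K + q)) * (t * (ε * K ^ 2 * Real.exp (ε * K) + q) + ε * K * Real.exp (ε * K))

theorem eulerErrorBound_monotoneOn {K ε q : ℝ} (hK : 0 ≤ K) (hε : 0 ≤ ε) (hq : 0 ≤ q) :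
    MonotoneOn (fun t => eulerErrorBound K t ε q) (Set.Ici 0) := by
  intro t (ht : 0 ≤ t) T _ htT
  simp only [eulerErrorBound]
  gcongr

theorem tendsto_eulerErrorBound (K T : ℝ) :
    Tendsto (fun p : ℝ × ℝ => eulerErrorBound K T p.1 p.2) (𝓝 0) (𝓝 0) := by
  have hcont : Continuous fun p : ℝ × ℝ => eulerErrorBound K T p.1 p.2 := by
    unfold eulerErrorBound
    fun_prop
  simpa [eulerErrorBound] using hcont.tendsto 0

section EulerScheme

variable {𝔸 : Type*} [NormedRing 𝔸] [NormOneClass 𝔸]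

theorem norm_prod_range_le_pow (f : ℕ → 𝔸) {C : ℝ} (hf : ∀ n, ‖f n‖ ≤ C) (m : ℕ) :
    ‖((List.range m).map f).prod‖ ≤ C ^ m := by
  induction m with
  | zero => simp
  | succ m ih =>
    rw [List.range_succ, List.map_append, List.prod_append, pow_succ]
    simpa using (norm_mul_le _ _).trans <|
      mul_le_mul ih (hf m) (norm_nonneg _) (pow_nonneg ((norm_nonneg _).trans (hf 0)) m)

theorem norm_prod_range_sub_pow_le (f : ℕ → 𝔸) (b : 𝔸) {C D : ℝ} (hC : 1 ≤ C)
    (hf : ∀ n, ‖f n‖ ≤ C) (hb : ‖b‖ ≤ C) (hfb : ∀ n, ‖f n - b‖ ≤ D) (m : ℕ) :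
    ‖((List.range m).map f).prod - b ^ m‖ ≤ m * D * C ^ m := by
  have hD : 0 ≤ D := (norm_nonneg _).trans (hfb 0)
  induction m with
  | zero => simp
  | succ m ih =>
    set P := ((List.range m).map f).prod
    rw [List.range_succ, List.map_append, List.prod_append, pow_succ]
    simp only [List.map_cons, List.map_nil, List.prod_singleton]
    have htelescope : P * f m - b ^ m * b = P * (f m - b) + (P - b ^ m) * b := by noncomm_ring
    have hPC : ‖P‖ ≤ C ^ m := norm_prod_range_le_pow f hf m
    calc ‖P * f m - b ^ m * b‖ ≤ ‖P‖ * ‖f m - b‖ + ‖P - b ^ m‖ * ‖b‖ := by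
          rw [htelescope]; exact norm_add_le_of_le (norm_mul_le _ _) (norm_mul_le _ _)
      _ ≤ C ^ m * D + m * D * C ^ m * C := by gcongr; exact hfb m
      _ ≤ (m + 1 : ℕ) * D * C ^ (m + 1) := by
          have hCD : C ^ m * D * 1 ≤ C ^ m * D * C :=
            mul_le_mul_of_nonneg_left hC (mul_nonneg (pow_nonneg (zero_le_one.trans hC) m) hD)
          push_cast
          rw [pow_succ]
          linarith

variable [NormedAlgebra ℝ 𝔸]

theorem norm_one_sub_smul_add_le (R r : 𝔸) {ε : ℝ} (hε : 0 ≤ ε) :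
    ‖1 - ε • R + r‖ ≤ Real.exp (ε * ‖R‖ + ‖r‖) :=
  calc ‖1 - ε • R + r‖ ≤ ‖(1 : 𝔸)‖ + ‖ε • R‖ + ‖r‖ := norm_add_le_of_le (norm_sub_le _ _) le_rfl
    _ = ε * ‖R‖ + ‖r‖ + 1 := by rw [norm_one, norm_smul, Real.norm_of_nonneg hε]; ring
    _ ≤ Real.exp (ε * ‖R‖ + ‖r‖) := Real.add_one_le_exp _

variable [CompleteSpace 𝔸]

theorem norm_one_sub_smul_add_sub_exp_le (R r : 𝔸) {ε : ℝ} (hε : 0 ≤ ε) :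
    ‖1 - ε • R + r - NormedSpace.exp (-(ε • R))‖
      ≤ (ε * ‖R‖) ^ 2 * Real.exp (ε * ‖R‖) + ‖r‖ := by
  have hnorm : ‖-(ε • R)‖ = ε * ‖R‖ := by rw [norm_neg, norm_smul, Real.norm_of_nonneg hε]
  have hsplit : 1 - ε • R + r - NormedSpace.exp (-(ε • R))
      = r - (NormedSpace.exp (-(ε • R)) - 1 - -(ε • R)) := by abel
  rw [hsplit, add_comm]
  exact (norm_sub_le _ _).trans
    (add_le_add_right (hnorm ▸ NormedSpace.norm_exp_sub_one_sub_le (-(ε • R))) _)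

theorem norm_prod_one_sub_smul_add_sub_exp_le (R : 𝔸) (r : ℕ → 𝔸) {ε ρ t : ℝ} (hε : 0 < ε)
    (ht : 0 ≤ t) (hr : ∀ n, ‖r n‖ ≤ ρ) :
    ‖((List.range ⌊ε⁻¹ * t⌋₊).map fun n => 1 - ε • R + r n).prod - NormedSpace.exp (-(t • R))‖
      ≤ eulerErrorBound ‖R‖ t ε (ρ / ε) := by
  let +nondep : NormedAlgebra ℚ 𝔸 := .restrictScalars ℚ ℝ 𝔸
  set K := ‖R‖
  set m := ⌊ε⁻¹ * t⌋₊
  have hK : 0 ≤ K := norm_nonneg R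
  have hρ : 0 ≤ ρ := (norm_nonneg _).trans (hr 0)
  have hmt : ε * m ≤ t := (le_inv_mul_iff₀ hε).1 (Nat.floor_le (by positivity))
  have htm : t - ε * m ≤ ε := by
    linarith [(inv_mul_lt_iff₀ hε).1 (Nat.lt_floor_add_one (ε⁻¹ * t))]
  set B := NormedSpace.exp (-(ε • R))
  have hB : ‖B‖ ≤ Real.exp (ε * K + ρ) := by
    refine (NormedSpace.norm_exp_le_exp_norm _).trans (Real.exp_le_exp.2 ?_)
    rw [norm_neg, norm_smul, Real.norm_of_nonneg hε.le]
    linarith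
  have hEuler : ‖((List.range m).map fun n => 1 - ε • R + r n).prod - B ^ m‖
      ≤ m * ((ε * K) ^ 2 * Real.exp (ε * K) + ρ) * Real.exp (ε * K + ρ) ^ m :=
    norm_prod_range_sub_pow_le _ B (Real.one_le_exp (by positivity))
      (fun n => (norm_one_sub_smul_add_le R (r n) hε.le).trans
        (Real.exp_le_exp.2 (by linarith [hr n]))) hB
      (fun n => (norm_one_sub_smul_add_sub_exp_le R (r n) hε.le).trans (by linarith [hr n])) m
  have hBm : B ^ m = NormedSpace.exp (-(t • R) + (t - ε * m) • R) := by
    rw [← NormedSpace.exp_nsmul, ← Nat.cast_smul_eq_nsmul ℝ]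
    congr 1
    module
  have hshift : ‖B ^ m - NormedSpace.exp (-(t • R))‖
      ≤ Real.exp (t * K) * ((t - ε * m) * K * Real.exp ((t - ε * m) * K)) := by
    have hcomm : Commute (-(t • R)) ((t - ε * m) • R) :=
      ((Commute.refl R).smul_left t).neg_left.smul_right _
    have := NormedSpace.norm_exp_add_sub_exp_le hcomm
    rwa [norm_neg, norm_smul, norm_smul, Real.norm_of_nonneg ht,
      Real.norm_of_nonneg (by linarith), ← hBm] at this
  set q := ρ / ε with hq_def
  have hKq : K ≤ K + q := le_add_of_nonneg_right (by positivity)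
  have hsteps : m * ((ε * K) ^ 2 * Real.exp (ε * K) + ρ)
      = ε * m * (ε * K ^ 2 * Real.exp (ε * K) + q) := by
    rw [hq_def]
    field_simp
  have hgrowth : Real.exp (ε * K + ρ) ^ m = Real.exp (ε * m * (K + q)) := by
    rw [← Real.exp_nat_mul]
    congr 1
    rw [hq_def]
    field_simp
  calc _ ≤ _ := norm_sub_le_norm_sub_add_norm_sub _ (B ^ m) _
    _ ≤ _ := add_le_add hEuler hshift
    _ ≤ t * (ε * K ^ 2 * Real.exp (ε * K) + q) * Real.exp (t * (K + q))
          + Real.exp (t * (K + q)) * (ε * K * Real.exp (ε * K)) := by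
        rw [hsteps, hgrowth]
        gcongr
    _ = eulerErrorBound K t ε q := by unfold eulerErrorBound; ring

end EulerScheme

attribute [local instance] Matrix.linftyOpNormedRing Matrix.linftyOpNormedAlgebra

theorem stmt3_general (N : ℕ) (R : Matrix (Fin N) (Fin N) ℂ)
    (ω : ℝ → ℝ)
    (hω : Tendsto (fun ε => ω ε / ε) (nhdsWithin 0 (Set.Ioi 0)) (nhds 0))
    (Rfam : ℝ → ℕ → Matrix (Fin N) (Fin N) ℂ)
    (hR : ∀ ε, 0 < ε → ∀ n : ℕ, ‖Rfam ε n‖ ≤ ω ε) :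
    ∀ T : ℝ, 0 ≤ T → ∀ δ : ℝ, 0 < δ → ∃ ε₀ : ℝ, 0 < ε₀ ∧
      ∀ ε : ℝ, 0 < ε → ε < ε₀ → ∀ t ∈ Set.Icc (0 : ℝ) T,
        ‖(((List.range ⌊ε⁻¹ * t⌋₊).map
              (fun n => 1 - ε • R + Rfam ε n)).prod)
            - NormedSpace.exp (-(t • R))‖ < δ := by
  intro T _ δ hδ
  rcases isEmpty_or_nonempty (Fin N) with hN | hN
  · have hzero (A : Matrix (Fin N) (Fin N) ℂ) : ‖A‖ = 0 := by rw [Subsingleton.elim A 0, norm_zero]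
    exact ⟨1, one_pos, fun ε _ _ t _ => hzero _ ▸ hδ⟩
  have hlim : Tendsto (fun ε => eulerErrorBound ‖R‖ T ε (ω ε / ε)) (𝓝[>] 0) (𝓝 0) :=
    (tendsto_eulerErrorBound ‖R‖ T).comp ((tendsto_id.mono_left nhdsWithin_le_nhds).prodMk_nhds hω)
  obtain ⟨ε₀, hε₀, hsmall⟩ := (nhdsGT_basis (0 : ℝ)).eventually_iff.1 (hlim.eventually_lt_const hδ)
  refine ⟨ε₀, hε₀, fun ε hε hεε₀ t ⟨ht, htT⟩ => ?_⟩
  have hq : 0 ≤ ω ε / ε := div_nonneg ((norm_nonneg _).trans (hR ε hε 0)) hε.le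
  calc _ ≤ eulerErrorBound ‖R‖ t ε (ω ε / ε) :=
        norm_prod_one_sub_smul_add_sub_exp_le R (Rfam ε) hε ht (hR ε hε)
    _ ≤ eulerErrorBound ‖R‖ T ε (ω ε / ε) :=
        eulerErrorBound_monotoneOn (norm_nonneg R) hε.le hq ht (ht.trans htT) htT
    _ < δ := hsmall ⟨hε, hεε₀⟩

/-- Let `R ∈ M_N(ℂ)`, let `ω(ε) = o(ε)` as `ε → 0⁺`, and let `(R_{ε,n})` be
matrices with `sup_n ‖R_{ε,n}‖ ≤ ω(ε)`.  Then the products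
`M_ε(t) = ∏_{n=0}^{⌊ε⁻¹t⌋−1} (Id − εR + R_{ε,n})` converge to `t ↦ e^{−tR}` uniformly on compact
subsets of `[0,∞)` as `ε → 0`. -/
theorem stmt3 (N : ℕ) (R : Matrix (Fin N) (Fin N) ℂ)
    (ω : ℝ → ℝ) (hω0 : ∀ ε, 0 < ε → 0 ≤ ω ε)
    (hω : Tendsto (fun ε => ω ε / ε) (nhdsWithin 0 (Set.Ioi 0)) (nhds 0))
    (Rfam : ℝ → ℕ → Matrix (Fin N) (Fin N) ℂ)
    (hR : ∀ ε, 0 < ε → ∀ n : ℕ, ‖Rfam ε n‖ ≤ ω ε) :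
    ∀ T : ℝ, 0 ≤ T → ∀ δ : ℝ, 0 < δ → ∃ ε₀ : ℝ, 0 < ε₀ ∧
      ∀ ε : ℝ, 0 < ε → ε < ε₀ → ∀ t ∈ Set.Icc (0 : ℝ) T,
        ‖(((List.range ⌊ε⁻¹ * t⌋₊).map
              (fun n => 1 - ε • R + Rfam ε n)).prod)
            - NormedSpace.exp (-(t • R))‖ < δ :=
  stmt3_general N R ω hω Rfam hR
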